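/- arXiv:2307.07229 — 5 statements merged into one kernel-verified Lean document; each statement's English description precedes it below -/
import Mathlib

section
/- (Migotti) If p < q are distinct primes, then every coefficient of the binary cyclotomic polynomial Φ_{pq} lies in the set {-1, 0, 1}. -/
open Polynomial Finset

private lemma migotti_divisors (p q : ℕ) (hp : p.Prime) (hq : q.Prime) (hne : p ≠ q) :
    (p * q).divisors = {1, p, q, p * q} := by
  rw [Nat.divisors_mul, hp.divisors, hq.divisors]
  ext d
  simp [Finset.mem_mul]
  aesop

private lemma migotti_FG_coeff (p q : ℕ) (hp : p.Prime) (hq : q.Prime) (hne : p ≠ q) (m : ℕ) :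
    ((∑ i ∈ range q, (X:ℤ[X]) ^ (p * i)) * (∑ j ∈ range p, (X:ℤ[X]) ^ (q * j))).coeff m = 0 ∨
    ((∑ i ∈ range q, (X:ℤ[X]) ^ (p * i)) * (∑ j ∈ range p, (X:ℤ[X]) ^ (q * j))).coeff m = 1 := by
  rw [Finset.sum_mul_sum]
  simp_rw [← pow_add, ← Finset.sum_product']
  rw [finset_sum_coeff]
  simp_rw [coeff_X_pow]
  rw [Finset.sum_boole]
  have hcard : ((range q ×ˢ range p).filter (fun x => m = p * x.1 + q * x.2)).card ≤ 1 := by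
    apply Finset.card_le_one.mpr
    rintro ⟨i, j⟩ hij ⟨i', j'⟩ hij'
    simp only [Finset.mem_filter, Finset.mem_product, Finset.mem_range] at hij hij'
    obtain ⟨⟨hiq, hjp⟩, he⟩ := hij
    obtain ⟨⟨hiq', hjp'⟩, he'⟩ := hij'
    have heq : p * i + q * j = p * i' + q * j' := by rw [← he, ← he']
    have hmod : p * i ≡ p * i' [MOD q] := by
      rw [Nat.modEq_iff_dvd]
      exact ⟨(j : ℤ) - j', by push_cast; nlinarith [heq]⟩
    have hii : i = i' := by
      have hco : q.gcd p = 1 := (Nat.coprime_primes hq hp).mpr (Ne.symm hne)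
      exact (Nat.ModEq.cancel_left_of_coprime hco hmod).eq_of_lt_of_lt hiq hiq'
    subst hii
    have : j = j' := Nat.eq_of_mul_eq_mul_left hq.pos (by omega)
    subst this; rfl
  omega

/-- (Migotti) If `p < q` are distinct primes, every coefficient of the binary
cyclotomic polynomial `Φ_{pq}` lies in `{-1, 0, 1}`. -/
theorem migotti_binary_cyclotomic_coeffs (p q : ℕ) (hp : p.Prime) (hq : q.Prime)
    (hpq : p < q) (k : ℕ) :
    (Polynomial.cyclotomic (p * q) ℤ).coeff k ∈ ({-1, 0, 1} : Set ℤ) := by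
  have hne : p ≠ q := hpq.ne
  have hp1 : 1 < p := hp.one_lt
  have hq1 : 1 < q := hq.one_lt
  have hpq1 : 1 < p * q := one_lt_mul'' hp1 hq1
  set F : ℤ[X] := ∑ i ∈ range q, (X:ℤ[X]) ^ (p * i) with hF
  set G : ℤ[X] := ∑ j ∈ range p, (X:ℤ[X]) ^ (q * j) with hG
  -- geometric sum identities
  have hFid : F * ((X:ℤ[X]) ^ p - 1) = X ^ (p * q) - 1 := by
    have := geom_sum_mul ((X:ℤ[X]) ^ p) q
    simpa [← pow_mul, hF, mul_comm] using this
  have hGid : G * ((X:ℤ[X]) ^ q - 1) = X ^ (p * q) - 1 := by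
    have := geom_sum_mul ((X:ℤ[X]) ^ q) p
    simpa [← pow_mul, hG, mul_comm] using this
  -- cyclotomic factorizations
  have hdiv := migotti_divisors p q hp hq hne
  have hprod : cyclotomic 1 ℤ * (cyclotomic p ℤ * (cyclotomic q ℤ * cyclotomic (p * q) ℤ)) =
      (X:ℤ[X]) ^ (p * q) - 1 := by
    have := prod_cyclotomic_eq_X_pow_sub_one (lt_trans one_pos hpq1) ℤ
    rw [hdiv] at this
    rw [← this]
    rw [Finset.prod_insert (by
        simp only [Finset.mem_insert, Finset.mem_singleton]; push_neg
        exact ⟨by omega, by omega, by nlinarith⟩),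
      Finset.prod_insert (by
        simp only [Finset.mem_insert, Finset.mem_singleton]; push_neg
        exact ⟨hne, by nlinarith⟩),
      Finset.prod_insert (by
        simp only [Finset.mem_singleton]; nlinarith), Finset.prod_singleton]
  have hXp : cyclotomic 1 ℤ * cyclotomic p ℤ = (X:ℤ[X]) ^ p - 1 := by
    have := prod_cyclotomic_eq_X_pow_sub_one hp.pos ℤ
    rw [hp.divisors] at this
    rw [← this, Finset.prod_insert (by simp; omega), Finset.prod_singleton]
  have hXq : cyclotomic 1 ℤ * cyclotomic q ℤ = (X:ℤ[X]) ^ q - 1 := by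
    have := prod_cyclotomic_eq_X_pow_sub_one hq.pos ℤ
    rw [hq.divisors] at this
    rw [← this, Finset.prod_insert (by simp; omega), Finset.prod_singleton]
  -- key identity
  have hnzp : ((X:ℤ[X]) ^ p - 1) ≠ 0 := by
    simpa using X_pow_sub_C_ne_zero hp.pos (1 : ℤ)
  have hnzq : ((X:ℤ[X]) ^ q - 1) ≠ 0 := by
    simpa using X_pow_sub_C_ne_zero hq.pos (1 : ℤ)
  have key : cyclotomic (p * q) ℤ * ((X:ℤ[X]) ^ (p * q) - 1) = (X - 1) * (F * G) := by
    apply mul_right_cancel₀ (mul_ne_zero hnzp hnzq)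
    calc cyclotomic (p * q) ℤ * ((X:ℤ[X]) ^ (p * q) - 1) * ((X ^ p - 1) * (X ^ q - 1))
        = (cyclotomic 1 ℤ * cyclotomic p ℤ) * (cyclotomic 1 ℤ * cyclotomic q ℤ) *
            (cyclotomic (p * q) ℤ * ((X:ℤ[X]) ^ (p * q) - 1)) := by rw [hXp, hXq]; ring
      _ = (cyclotomic 1 ℤ) * ((X:ℤ[X]) ^ (p * q) - 1) * ((X:ℤ[X]) ^ (p * q) - 1) := by
            rw [← hprod]; ring
      _ = (X - 1) * (F * ((X:ℤ[X]) ^ p - 1)) * (G * ((X:ℤ[X]) ^ q - 1)) := by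
            rw [hFid, hGid, cyclotomic_one]
      _ = (X - 1) * (F * G) * (((X:ℤ[X]) ^ p - 1) * ((X ^ q - 1))) := by ring
  -- coefficient comparison
  by_cases hk : p * q ≤ k
  · have : (cyclotomic (p * q) ℤ).natDegree < k :=
      lt_of_lt_of_le (by rw [natDegree_cyclotomic]; exact Nat.totient_lt _ hpq1) hk
    rw [coeff_eq_zero_of_natDegree_lt this]
    simp
  · push_neg at hk
    have hc := congrArg (fun f : ℤ[X] => f.coeff k) key
    simp only [mul_sub, mul_one, sub_mul, one_mul, coeff_sub] at hc
    rw [coeff_mul_X_pow' (cyclotomic (p * q) ℤ) (p * q) k, if_neg (by omega)] at hc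
    -- hc : 0 - Φ.coeff k = (X * (F*G)).coeff k - (F*G).coeff k
    have hb := migotti_FG_coeff p q hp hq hne k
    have hXb : (X * (F * G)).coeff k = 0 ∨ (X * (F * G)).coeff k = 1 := by
      cases k with
      | zero => left; simp [mul_coeff_zero]
      | succ n =>
        rw [coeff_X_mul]
        exact migotti_FG_coeff p q hp hq hne n
    rw [← hF, ← hG] at hb
    simp only [Set.mem_insert_iff, Set.mem_singleton_iff]
    omega
end

section
/- (Carlitz) If p < q are distinct primes, then the number of nonzero coefficients of Φ_{pq} equals 2·p̄·q̄ − 1, where p̄ is the unique integer in [1, q) with p·p̄ ≡ 1 (mod q), and q̄ is the unique integer in [1, p) with q·q̄ ≡ 1 (mod p). -/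
open Polynomial Finset

/-- (Carlitz) If `p < q` are distinct primes, the number of nonzero coefficients of
`Φ_{pq}` equals `2·p̄·q̄ − 1`, where `p̄ ∈ [1, q)` is the inverse of `p` mod `q` and
`q̄ ∈ [1, p)` is the inverse of `q` mod `p`. -/
theorem carlitz_binary_cyclotomic (p q : ℕ) (hp : p.Prime) (hq : q.Prime) (hpq : p < q)
    (pb qb : ℕ) (hpb1 : 1 ≤ pb) (hpbq : pb < q) (hpb : p * pb ≡ 1 [MOD q])
    (hqb1 : 1 ≤ qb) (hqbp : qb < p) (hqb : q * qb ≡ 1 [MOD p]) :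
    (Polynomial.cyclotomic (p * q) ℤ).support.card = 2 * pb * qb - 1 := by
  have hp2 : 2 ≤ p := hp.two_le
  have hq2 : 2 ≤ q := hq.two_le
  haveI : Fact p.Prime := ⟨hp⟩
  haveI : Fact q.Prime := ⟨hq⟩
  -- ### Step 1: the key equation `p·pb + q·qb = p·q + 1`
  have key : p * pb + q * qb = p * q + 1 := by
    have h1 : p * pb + q * qb ≡ 1 [MOD q] := by
      calc p * pb + q * qb ≡ 1 + q * qb [MOD q] := hpb.add_right _
        _ ≡ 1 + 0 [MOD q] :=
            Nat.ModEq.add_left _ (Nat.modEq_zero_iff_dvd.mpr (dvd_mul_right q qb))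
        _ = 1 := by ring
    have h2 : p * pb + q * qb ≡ 1 [MOD p] := by
      calc p * pb + q * qb ≡ 0 + q * qb [MOD p] :=
            Nat.ModEq.add_right _ (Nat.modEq_zero_iff_dvd.mpr (dvd_mul_right p pb))
        _ ≡ 0 + 1 [MOD p] := Nat.ModEq.add_left _ hqb
        _ = 1 := by ring
    have hco : Nat.Coprime p q := (Nat.coprime_primes hp hq).mpr hpq.ne
    have h3 : p * pb + q * qb ≡ 1 [MOD p * q] :=
      (Nat.modEq_and_modEq_iff_modEq_mul hco).mp ⟨h2, h1⟩
    have hlb : p + q ≤ p * pb + q * qb := by nlinarith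
    have h4 : p * q ∣ p * pb + q * qb - 1 := (Nat.modEq_iff_dvd' (by omega)).mp h3.symm
    obtain ⟨k, hk⟩ := h4
    have h5 : p * pb < p * q := by nlinarith
    have h6 : q * qb < p * q := by nlinarith
    have hub : p * q * k < p * q * 2 := by omega
    have hk2 : k < 2 := Nat.lt_of_mul_lt_mul_left hub
    have hk0 : k ≠ 0 := by
      intro h0
      rw [h0, mul_zero] at hk
      omega
    have hk1 : k = 1 := by omega
    subst hk1
    rw [mul_one] at hk
    omega
  -- ### Step 2: modular cancellation lemmas
  have haux : ∀ a j : ℕ, a + q * j ≡ a [MOD q] := by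
    intro a j
    simpa using (Nat.ModEq.refl a).add (Nat.modEq_zero_iff_dvd.mpr (dvd_mul_right q j))
  have hmod : ∀ i j i' j' δ : ℕ, p * i + q * j = p * i' + q * j' + δ →
      p * i ≡ p * i' + δ [MOD q] := by
    intro i j i' j' δ h
    calc p * i ≡ p * i + q * j [MOD q] := (haux (p * i) j).symm
      _ = (p * i' + δ) + q * j' := by rw [h]; ring
      _ ≡ p * i' + δ [MOD q] := haux _ j'
  have hcancel : ∀ i i' : ℕ, i < q → i' < q → p * i ≡ p * i' [MOD q] → i = i' := by
    intro i i' hi hi' h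
    have h1 : p * pb * i ≡ p * pb * i' [MOD q] := by
      calc p * pb * i = pb * (p * i) := by ring
        _ ≡ pb * (p * i') [MOD q] := h.mul_left pb
        _ = p * pb * i' := by ring
    have h2 : i ≡ i' [MOD q] := by
      calc i = 1 * i := (one_mul i).symm
        _ ≡ p * pb * i [MOD q] := (hpb.mul_right i).symm
        _ ≡ p * pb * i' [MOD q] := h1
        _ ≡ 1 * i' [MOD q] := hpb.mul_right i'
        _ = i' := one_mul i'
    rwa [Nat.ModEq, Nat.mod_eq_of_lt hi, Nat.mod_eq_of_lt hi'] at h2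
  have hinj : ∀ i j i' j' : ℕ, i < q → i' < q →
      p * i + q * j = p * i' + q * j' → i = i' ∧ j = j' := by
    intro i j i' j' hi hi' h
    have h1 : p * i ≡ p * i' [MOD q] := by
      simpa using hmod i j i' j' 0 (by simpa using h)
    have h2 : i = i' := hcancel i i' hi hi' h1
    subst h2
    exact ⟨rfl, Nat.eq_of_mul_eq_mul_left (by omega) (Nat.add_left_cancel h)⟩
  -- disjointness of exponent sets
  have hdisjexp : ∀ i j i' j' : ℕ, i < pb → i' < q - pb →
      p * i + q * j ≠ p * i' + q * j' + 1 := by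
    intro i j i' j' hi hi' h
    have h1 : p * i ≡ p * i' + 1 [MOD q] := hmod i j i' j' 1 h
    have h2 : p * i' + 1 ≡ p * (i' + pb) [MOD q] := by
      calc p * i' + 1 ≡ p * i' + p * pb [MOD q] := Nat.ModEq.add_left _ hpb.symm
        _ = p * (i' + pb) := by ring
    have h3 : i = i' + pb :=
      hcancel i (i' + pb) (lt_trans hi hpbq) (by omega) (h1.trans h2)
    omega
  -- ### Step 3: the Lam–Leung polynomial
  set A : ℤ[X] := ∑ i ∈ range pb, X ^ (p * i) with hA_def
  set B : ℤ[X] := ∑ i ∈ range qb, X ^ (q * i) with hB_def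
  set C : ℤ[X] := ∑ i ∈ range (q - pb), X ^ (p * i) with hC_def
  set D : ℤ[X] := ∑ i ∈ range (p - qb), X ^ (q * i) with hD_def
  set F : ℤ[X] := A * B - X * (C * D) with hF_def
  have hgeom : ∀ m n : ℕ, (∑ i ∈ range n, (X : ℤ[X]) ^ (m * i)) * (X ^ m - 1)
      = X ^ (m * n) - 1 := by
    intro m n
    simpa [← pow_mul] using geom_sum_mul ((X : ℤ[X]) ^ m) n
  -- exponent arithmetic
  have e1 : p * (q - pb) + p * pb = p * q := by
    rw [← Nat.mul_add, Nat.sub_add_cancel hpbq.le]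
  have e2 : q * (p - qb) + q * qb = p * q := by
    rw [← Nat.mul_add, Nat.sub_add_cancel hqbp.le]
    exact Nat.mul_comm q p
  have hu : p * pb = q * (p - qb) + 1 := by omega
  have hv : q * qb = p * (q - pb) + 1 := by omega
  have hN : p * q = p * (q - pb) + q * (p - qb) + 1 := by omega
  -- the multiplicative identity
  have h_mul : F * ((X ^ p - 1) * (X ^ q - 1)) = ((X : ℤ[X]) ^ (p * q) - 1) * (X - 1) := by
    have hA := hgeom p pb
    have hB := hgeom q qb
    have hC := hgeom p (q - pb)
    have hD := hgeom q (p - qb)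
    calc F * ((X ^ p - 1) * (X ^ q - 1))
        = (A * (X ^ p - 1)) * (B * (X ^ q - 1))
          - X * ((C * (X ^ p - 1)) * (D * (X ^ q - 1))) := by rw [hF_def]; ring
      _ = ((X : ℤ[X]) ^ (p * pb) - 1) * (X ^ (q * qb) - 1)
          - X * ((X ^ (p * (q - pb)) - 1) * (X ^ (q * (p - qb)) - 1)) := by
            rw [hA, hB, hC, hD]
      _ = ((X : ℤ[X]) ^ (p * q) - 1) * (X - 1) := by
            rw [hu, hv, hN]; ring
  -- ### Step 4: cyclotomic side
  have hdiv : (p * q).divisors = {1, p, q, p * q} := by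
    ext d
    simp only [Nat.mem_divisors, Finset.mem_insert, Finset.mem_singleton]
    constructor
    · rintro ⟨hd, -⟩
      by_cases hpd : p ∣ d
      · obtain ⟨e, rfl⟩ := hpd
        have he : e ∣ q := (Nat.mul_dvd_mul_iff_left (show 0 < p by omega)).mp hd
        rcases hq.eq_one_or_self_of_dvd e he with rfl | rfl
        · right; left; simp
        · right; right; right; rfl
      · have hco : Nat.Coprime d p := ((hp.coprime_iff_not_dvd).mpr hpd).symm
        have hdq : d ∣ q := hco.dvd_of_dvd_mul_left hd
        rcases hq.eq_one_or_self_of_dvd d hdq with rfl | rfl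
        · left; rfl
        · right; right; left; rfl
    · have hne : p * q ≠ 0 := by positivity
      rintro (rfl | rfl | rfl | rfl)
      · exact ⟨one_dvd _, hne⟩
      · exact ⟨dvd_mul_right _ _, hne⟩
      · exact ⟨dvd_mul_left _ _, hne⟩
      · exact ⟨dvd_rfl, hne⟩
  have hppq : p < p * q := by nlinarith
  have hqpq : q < p * q := by nlinarith
  have hprod : ((X : ℤ[X]) - 1) * (cyclotomic p ℤ * (cyclotomic q ℤ * cyclotomic (p * q) ℤ))
      = X ^ (p * q) - 1 := by
    have h := prod_cyclotomic_eq_X_pow_sub_one (show 0 < p * q by positivity) ℤ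
    rw [hdiv] at h
    have m1 : (1 : ℕ) ∉ ({p, q, p * q} : Finset ℕ) := by
      simp only [Finset.mem_insert, Finset.mem_singleton]
      push_neg
      exact ⟨by omega, by omega, by omega⟩
    have m2 : p ∉ ({q, p * q} : Finset ℕ) := by
      simp only [Finset.mem_insert, Finset.mem_singleton]
      push_neg
      exact ⟨by omega, by omega⟩
    have m3 : q ∉ ({p * q} : Finset ℕ) := by
      simp only [Finset.mem_singleton]
      omega
    rw [Finset.prod_insert m1, Finset.prod_insert m2, Finset.prod_insert m3,
      Finset.prod_singleton, cyclotomic_one] at h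
    exact h
  have hXp : cyclotomic p ℤ * (X - 1) = X ^ p - 1 := cyclotomic_prime_mul_X_sub_one ℤ p
  have hXq : cyclotomic q ℤ * (X - 1) = X ^ q - 1 := cyclotomic_prime_mul_X_sub_one ℤ q
  have h_cyc : cyclotomic (p * q) ℤ * ((X ^ p - 1) * (X ^ q - 1))
      = ((X : ℤ[X]) ^ (p * q) - 1) * (X - 1) := by
    calc cyclotomic (p * q) ℤ * ((X ^ p - 1) * (X ^ q - 1))
        = (((X : ℤ[X]) - 1) * (cyclotomic p ℤ * (cyclotomic q ℤ * cyclotomic (p * q) ℤ)))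
          * (X - 1) := by rw [← hXp, ← hXq]; ring
      _ = ((X : ℤ[X]) ^ (p * q) - 1) * (X - 1) := by rw [hprod]
  -- cancel
  have hne1 : ((X : ℤ[X]) ^ p - 1) ≠ 0 := by
    simpa using X_pow_sub_C_ne_zero (show 0 < p by omega) (1 : ℤ)
  have hne2 : ((X : ℤ[X]) ^ q - 1) ≠ 0 := by
    simpa using X_pow_sub_C_ne_zero (show 0 < q by omega) (1 : ℤ)
  have hF : cyclotomic (p * q) ℤ = F :=
    mul_right_cancel₀ (mul_ne_zero hne1 hne2) (h_cyc.trans h_mul.symm)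
  -- ### Step 5: support of F
  set Sp : Finset ℕ := (range pb ×ˢ range qb).image (fun x : ℕ × ℕ => p * x.1 + q * x.2)
    with hSp_def
  set Sn : Finset ℕ :=
    (range (q - pb) ×ˢ range (p - qb)).image (fun x : ℕ × ℕ => p * x.1 + q * x.2 + 1)
    with hSn_def
  have hinjP : ∀ x ∈ range pb ×ˢ range qb, ∀ y ∈ range pb ×ˢ range qb,
      p * x.1 + q * x.2 = p * y.1 + q * y.2 → x = y := by
    rintro ⟨i, j⟩ hx ⟨i', j'⟩ hy h
    simp only [Finset.mem_product, Finset.mem_range] at hx hy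
    have := hinj i j i' j' (lt_trans hx.1 hpbq) (lt_trans hy.1 hpbq) h
    simp [Prod.ext_iff, this.1, this.2]
  have hinjN : ∀ x ∈ range (q - pb) ×ˢ range (p - qb), ∀ y ∈ range (q - pb) ×ˢ range (p - qb),
      p * x.1 + q * x.2 + 1 = p * y.1 + q * y.2 + 1 → x = y := by
    rintro ⟨i, j⟩ hx ⟨i', j'⟩ hy h
    simp only [Finset.mem_product, Finset.mem_range] at hx hy
    have h' : p * i + q * j = p * i' + q * j' := Nat.add_right_cancel h
    have := hinj i j i' j' (by omega) (by omega) h'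
    simp [Prod.ext_iff, this.1, this.2]
  have hAB : A * B = ∑ n ∈ Sp, (X : ℤ[X]) ^ n := by
    rw [hSp_def, Finset.sum_image hinjP, Finset.sum_product, hA_def, hB_def,
      Finset.sum_mul_sum]
    simp [← pow_add]
  have hCD : X * (C * D) = ∑ n ∈ Sn, (X : ℤ[X]) ^ n := by
    rw [hSn_def, Finset.sum_image hinjN, Finset.sum_product, hC_def, hD_def,
      Finset.sum_mul_sum, Finset.mul_sum]
    refine Finset.sum_congr rfl fun i _ => ?_
    rw [Finset.mul_sum]
    refine Finset.sum_congr rfl fun j _ => ?_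
    rw [← pow_add, pow_succ]
    ring
  have hFsum : F = (∑ n ∈ Sp, (X : ℤ[X]) ^ n) - ∑ n ∈ Sn, (X : ℤ[X]) ^ n := by
    rw [hF_def, hAB, hCD]
  have hcoeff : ∀ (S : Finset ℕ) (m : ℕ),
      (∑ n ∈ S, (X : ℤ[X]) ^ n).coeff m = if m ∈ S then 1 else 0 := by
    intro S m
    rw [finset_sum_coeff]
    simp only [coeff_X_pow]
    exact Finset.sum_ite_eq S m (fun _ => 1)
  have hdisj : Disjoint Sp Sn := by
    rw [Finset.disjoint_left]
    intro n hnp hnn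
    rw [hSp_def, Finset.mem_image] at hnp
    rw [hSn_def, Finset.mem_image] at hnn
    obtain ⟨⟨i, j⟩, hx, hfx⟩ := hnp
    obtain ⟨⟨i', j'⟩, hy, hfy⟩ := hnn
    simp only [Finset.mem_product, Finset.mem_range] at hx hy
    exact hdisjexp i j i' j' hx.1 hy.1 (hfx.trans hfy.symm)
  have hsupp : (cyclotomic (p * q) ℤ).support = Sp ∪ Sn := by
    rw [hF, hFsum]
    ext m
    simp only [Polynomial.mem_support_iff, Polynomial.coeff_sub, hcoeff, Finset.mem_union]
    have hd := Finset.disjoint_left.mp hdisj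
    by_cases h1 : m ∈ Sp <;> by_cases h2 : m ∈ Sn <;> simp [h1, h2]
    exact hd h1 h2
  rw [hsupp, Finset.card_union_of_disjoint hdisj, hSp_def, hSn_def,
    Finset.card_image_of_injOn (fun x hx y hy h => hinjP x hx y hy h),
    Finset.card_image_of_injOn (fun x hx y hy h => hinjN x hx y hy h),
    Finset.card_product, Finset.card_product, Finset.card_range, Finset.card_range,
    Finset.card_range, Finset.card_range]
  -- final arithmetic
  have hc : pb + (q - pb) = q := by omega
  have hd : qb + (p - qb) = p := by omega
  have hkey2 : pb * qb = (q - pb) * (p - qb) + 1 := by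
    rw [← hc, ← hd] at key
    ring_nf at key ⊢
    linarith
  have h2 : 2 * pb * qb = pb * qb + pb * qb := by ring
  rw [h2, hkey2]
  set k2 := (q - pb) * (p - qb) with hk2def
  omega
end

section
/- Fix η > 0 and let 0 < γ ≤ 1/2 − η. Define ρ(t) = (1/2)·(1 + 1/t − sqrt((1 + 1/t)² − (2/t)·(t^{1/2+γ} + 1))). Then as t → ∞, ρ(t) = t^{γ−1/2}/2 + O(t^{2γ−1}), i.e., there exist constants C, T > 0 (depending only on η) such that |ρ(t) − t^{γ−1/2}/2| ≤ C·t^{2γ−1} for all t ≥ T. -/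
noncomputable def rho (γ t : ℝ) : ℝ :=
  (1 / 2) * (1 + 1 / t - Real.sqrt ((1 + 1 / t) ^ 2 - (2 / t) * (t ^ ((1 : ℝ) / 2 + γ) + 1)))

/-- For fixed `η > 0` and `0 < γ ≤ 1/2 − η`, we have
`ρ(t) = t^{γ−1/2}/2 + O(t^{2γ−1})` as `t → ∞`, with constants depending only on `η`. -/
theorem rho_asymptotic (η : ℝ) (hη : 0 < η) :
    ∃ C > (0 : ℝ), ∃ T > (0 : ℝ), ∀ γ : ℝ, 0 < γ → γ ≤ 1 / 2 - η → ∀ t : ℝ, T ≤ t →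
      |rho γ t - t ^ (γ - 1 / 2) / 2| ≤ C * t ^ (2 * γ - 1) := by
  refine ⟨3, by norm_num, max 1 ((4 : ℝ) ^ (1 / η)), lt_of_lt_of_le one_pos (le_max_left _ _),
    fun γ hγ0 hγle t htT => ?_⟩
  have ht1 : (1 : ℝ) ≤ t := le_trans (le_max_left _ _) htT
  have ht0 : (0 : ℝ) < t := lt_of_lt_of_le one_pos ht1
  have htη : (4 : ℝ) ≤ t ^ η := by
    have h1 : ((4 : ℝ) ^ (1 / η)) ^ η = 4 := by
      rw [← Real.rpow_mul (by norm_num : (0:ℝ) ≤ 4), one_div,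
        inv_mul_cancel₀ hη.ne', Real.rpow_one]
    calc (4 : ℝ) = ((4 : ℝ) ^ (1 / η)) ^ η := h1.symm
      _ ≤ t ^ η := Real.rpow_le_rpow (by positivity) (le_trans (le_max_right _ _) htT) hη.le
  set x := t ^ (γ - 1 / 2) with hxdef
  have hx0 : 0 < x := Real.rpow_pos_of_pos ht0 _
  have hx14 : x ≤ 1 / 4 := by
    have h1 : x ≤ t ^ (-η) :=
      Real.rpow_le_rpow_of_exponent_le ht1 (by linarith)
    have h2 : t ^ (-η) = (t ^ η)⁻¹ := Real.rpow_neg ht0.le η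
    have h3 : (t ^ η)⁻¹ ≤ 1 / 4 := by
      rw [one_div]
      exact inv_anti₀ (by norm_num) htη
    linarith [h1, h2 ▸ h1]
  have h1t : 1 / t ≤ x ^ 2 := by
    have hx2 : x ^ 2 = t ^ (2 * γ - 1) := by
      rw [hxdef, ← Real.rpow_natCast (t ^ (γ - 1/2)) 2, ← Real.rpow_mul ht0.le]
      norm_num
      ring_nf
    have : t ^ (-1 : ℝ) ≤ t ^ (2 * γ - 1) :=
      Real.rpow_le_rpow_of_exponent_le ht1 (by linarith)
    rw [Real.rpow_neg_one] at this
    rw [hx2, one_div]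
    exact this
  have hx2 : t ^ (2 * γ - 1) = x ^ 2 := by
    rw [hxdef, ← Real.rpow_natCast (t ^ (γ - 1/2)) 2, ← Real.rpow_mul ht0.le]
    norm_num
    ring_nf
  -- simplify the sqrt argument
  have hA : (1 + 1 / t) ^ 2 - (2 / t) * (t ^ ((1 : ℝ) / 2 + γ) + 1) = 1 - 2 * x + 1 / t ^ 2 := by
    have hts : t ^ ((1 : ℝ) / 2 + γ) = x * t := by
      have he : (1 : ℝ) / 2 + γ = (γ - 1 / 2) + 1 := by ring
      rw [hxdef, he, Real.rpow_add ht0, Real.rpow_one]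
    rw [hts]
    field_simp
    ring
  set s := Real.sqrt (1 - 2 * x + 1 / t ^ 2) with hsdef
  have hAnn : (0 : ℝ) ≤ 1 - 2 * x + 1 / t ^ 2 := by
    have : (0:ℝ) < 1 / t ^ 2 := by positivity
    linarith
  have hs2 : s ^ 2 = 1 - 2 * x + 1 / t ^ 2 := Real.sq_sqrt hAnn
  have hs0 : 0 ≤ s := Real.sqrt_nonneg _
  have hsl : 1 / 2 ≤ s := by
    have h12 : (1 : ℝ) / 4 ≤ s ^ 2 := by
      have : (0:ℝ) < 1 / t ^ 2 := by positivity
      rw [hs2]; linarith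
    nlinarith
  have hinvt : 0 < 1 / t := by positivity
  -- the key identity
  have hd : (1 + 1 / t - s - x) * (1 + 1 / t - x + s) = x ^ 2 + 2 * (1 - x) / t := by
    linear_combination (-1 : ℝ) * hs2
  have hden : 1 ≤ 1 + 1 / t - x + s := by linarith
  have h1t' : 1 ≤ x ^ 2 * t := (div_le_iff₀ ht0).mp h1t
  have hN3 : x ^ 2 + 2 * (1 - x) / t ≤ 3 * x ^ 2 := by
    have h2 : 2 * (1 - x) / t ≤ 2 * x ^ 2 := by
      rw [div_le_iff₀ ht0]; nlinarith
    linarith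
  have hN0 : 0 ≤ x ^ 2 + 2 * (1 - x) / t := by
    have h3 : 0 ≤ 2 * (1 - x) / t := div_nonneg (by linarith) ht0.le
    nlinarith [sq_nonneg x]
  have hD0 : (0:ℝ) < 1 + 1 / t - x + s := by linarith
  have hdeq : 1 + 1 / t - s - x = (x ^ 2 + 2 * (1 - x) / t) / (1 + 1 / t - x + s) :=
    (eq_div_iff hD0.ne').mpr hd
  have hd0 : 0 ≤ 1 + 1 / t - s - x := by
    rw [hdeq]; exact div_nonneg hN0 hD0.le
  have hdle : 1 + 1 / t - s - x ≤ 3 * x ^ 2 := by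
    rw [hdeq]
    calc (x ^ 2 + 2 * (1 - x) / t) / (1 + 1 / t - x + s) ≤ x ^ 2 + 2 * (1 - x) / t :=
          div_le_self hN0 hden
      _ ≤ 3 * x ^ 2 := hN3
  have hrho : rho γ t = (1 / 2) * (1 + 1 / t - s) := by
    simp only [rho]
    rw [hA]
  rw [hrho, hx2, abs_of_nonneg (by linarith)]
  linarith
end

section
/- Fix η > 0 and let 0 < γ ≤ 1/2 − η. The function ρ(t) = (1/2)·(1 + 1/t − sqrt((1 + 1/t)² − (2/t)·(t^{1/2+γ} + 1))) is (eventually) monotonically decreasing: there exists T(η) > 0 such that ρ is decreasing on (T(η), ∞). -/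
private lemma rho_aux (η : ℝ) (hη : 0 < η) (c : ℝ) (hc0 : 0 < c) (hηc : η ≤ 1 - c) :
    ∃ T > (0 : ℝ), StrictAntiOn
      (fun t : ℝ => (1 / 2) * (1 + 1 / t - Real.sqrt ((1 + 1 / t) ^ 2 - (2 / t) * (t ^ c + 1))))
      (Set.Ioi T) := by
  refine ⟨2 ^ ((1:ℝ)/η) + 1/η + 1, by positivity, ?_⟩
  have main : ∀ t ∈ Set.Ioi (2 ^ ((1:ℝ)/η) + 1/η + 1), ∃ d,
      HasDerivAt (fun t : ℝ =>
        (1 / 2) * (1 + 1 / t - Real.sqrt ((1 + 1 / t) ^ 2 - (2 / t) * (t ^ c + 1)))) d t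
      ∧ d < 0 := by
    intro t ht
    rw [Set.mem_Ioi] at ht
    have h2pow : (0:ℝ) < 2 ^ ((1:ℝ)/η) := by positivity
    have hηinv : (0:ℝ) < 1/η := by positivity
    have ht1 : 1 < t := by linarith
    have ht0 : 0 < t := by linarith
    -- t^η > 2
    have htη : 2 < t ^ η := by
      have h2 : (2:ℝ) ^ ((1:ℝ)/η) < t := by linarith
      have h3 : ((2:ℝ) ^ ((1:ℝ)/η)) ^ η < t ^ η :=
        Real.rpow_lt_rpow (by positivity) h2 hη
      have h4 : ((2:ℝ) ^ ((1:ℝ)/η)) ^ η = 2 := by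
        rw [← Real.rpow_mul (by norm_num : (0:ℝ) ≤ 2)]
        rw [one_div, inv_mul_cancel₀ hη.ne']
        exact Real.rpow_one 2
      linarith [h4 ▸ h3]
    -- t^(1-c) > 2
    have h1c : 2 < t ^ (1 - c) := by
      have := Real.rpow_le_rpow_of_exponent_le ht1.le hηc
      linarith
    -- t^c / t < 1/2
    have hceq : t ^ (c - 1) = t ^ c / t := by
      rw [Real.rpow_sub ht0, Real.rpow_one]
    have hcinv : t ^ (c - 1) * t ^ (1 - c) = 1 := by
      rw [← Real.rpow_add ht0]; norm_num
    have hpos1 : 0 < t ^ (1 - c) := by positivity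
    have hpos2 : 0 < t ^ (c - 1) := by positivity
    have hhalf : t ^ c / t < 1 / 2 := by
      rw [← hceq]
      nlinarith
    -- t ≤ t^c * t
    have hut : t ≤ t ^ c * t := by
      have h5 : t ^ (1:ℝ) ≤ t ^ (c + 1) :=
        Real.rpow_le_rpow_of_exponent_le ht1.le (by linarith)
      have h6 : t ^ (c + 1) = t ^ c * t := by
        rw [Real.rpow_add ht0, Real.rpow_one]
      rw [Real.rpow_one] at h5
      linarith [h6 ▸ h5]
    -- g t > 0
    have hgexp : (1 + 1/t) ^ 2 - (2/t) * (t ^ c + 1) = 1 + 1/t^2 - 2*(t ^ c/t) := by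
      field_simp
      ring
    have hgpos : 0 < (1 + 1/t) ^ 2 - (2/t) * (t ^ c + 1) := by
      rw [hgexp]
      have : (0:ℝ) < 1/t^2 := by positivity
      linarith
    -- derivative pieces
    have h1 : HasDerivAt (fun y : ℝ => 1/y) (-(1/t^2)) t := by
      simpa [one_div] using hasDerivAt_inv ht0.ne'
    have hA : HasDerivAt (fun y : ℝ => 1 + 1/y) (-(1/t^2)) t := h1.const_add 1
    have hsq : HasDerivAt (fun y : ℝ => (1 + 1/y) ^ 2)
        ((2:ℕ) * (1 + 1/t) ^ (2-1) * -(1/t^2)) t := hA.pow 2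
    have hpow : HasDerivAt (fun y : ℝ => y ^ c) (c * t ^ (c - 1)) t :=
      Real.hasDerivAt_rpow_const (Or.inl ht0.ne')
    have h2t : HasDerivAt (fun y : ℝ => 2/y) (2 * -(1/t^2)) t := by
      have := h1.const_mul (2:ℝ)
      simpa [mul_one_div, div_eq_mul_inv] using this
    have hB : HasDerivAt (fun y : ℝ => (2/y) * (y ^ c + 1))
        ((2 * -(1/t^2)) * (t ^ c + 1) + (2/t) * (c * t ^ (c - 1))) t :=
      h2t.mul (hpow.add_const 1)
    have hg : HasDerivAt (fun y : ℝ => (1 + 1/y) ^ 2 - (2/y) * (y ^ c + 1))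
        ((2:ℕ) * (1 + 1/t) ^ (2-1) * -(1/t^2)
          - ((2 * -(1/t^2)) * (t ^ c + 1) + (2/t) * (c * t ^ (c - 1)))) t := hsq.sub hB
    have hsqrt := hg.sqrt hgpos.ne'
    have hfinal := (hA.sub hsqrt).const_mul (1/2 : ℝ)
    refine ⟨_, hfinal, ?_⟩
    -- sign of the derivative
    have hGDeq : (2:ℕ) * (1 + 1/t) ^ (2-1) * -(1/t^2)
          - ((2 * -(1/t^2)) * (t ^ c + 1) + (2/t) * (c * t ^ (c - 1)))
        = (2*((1-c)*(t ^ c*t)) - 2)/t^3 := by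
      rw [hceq]
      push_cast
      norm_num
      field_simp
      ring
    have hηt : 1 < η * t := by
      have h7 : 1/η < t := by linarith
      have := (div_lt_iff₀ hη).mp h7
      linarith [this]
    have hkey : 1 < (1-c)*(t ^ c*t) := by
      have h8 : η * t ≤ (1-c) * t := by nlinarith
      have h9 : (1-c) * t ≤ (1-c)*(t ^ c*t) := by nlinarith
      linarith
    have hGDpos : 0 < (2:ℕ) * (1 + 1/t) ^ (2-1) * -(1/t^2)
          - ((2 * -(1/t^2)) * (t ^ c + 1) + (2/t) * (c * t ^ (c - 1))) := by
      rw [hGDeq]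
      have ht3 : (0:ℝ) < t^3 := by positivity
      have h10 : (0:ℝ) < 2*((1-c)*(t ^ c*t)) - 2 := by linarith
      positivity
    have hsg : 0 < Real.sqrt ((1 + 1/t) ^ 2 - (2/t) * (t ^ c + 1)) :=
      Real.sqrt_pos.mpr hgpos
    have hdivpos : 0 < ((2:ℕ) * (1 + 1/t) ^ (2-1) * -(1/t^2)
          - ((2 * -(1/t^2)) * (t ^ c + 1) + (2/t) * (c * t ^ (c - 1))))
          / (2 * Real.sqrt ((1 + 1/t) ^ 2 - (2/t) * (t ^ c + 1))) :=
      div_pos hGDpos (by linarith)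
    have ht2 : (0:ℝ) < 1/t^2 := by positivity
    linarith [hdivpos, ht2]
  apply strictAntiOn_of_deriv_neg (convex_Ioi _)
  · intro x hx
    obtain ⟨d, hd, _⟩ := main x hx
    exact hd.differentiableAt.continuousAt.continuousWithinAt
  · intro x hx
    rw [interior_Ioi] at hx
    obtain ⟨d, hd, hdneg⟩ := main x hx
    rw [hd.deriv]
    exact hdneg

/-- For fixed `η > 0` and `0 < γ ≤ 1/2 − η`, the function `ρ` is eventually decreasing:
there exists `T(η) > 0` such that `ρ` is (strictly) decreasing on `(T(η), ∞)`. -/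
theorem rho_eventually_decreasing (η : ℝ) (hη : 0 < η) (γ : ℝ) (hγ0 : 0 < γ)
    (hγ : γ ≤ 1 / 2 - η) :
    ∃ T > (0 : ℝ), StrictAntiOn (rho γ) (Set.Ioi T) := by
  obtain ⟨T, hT, h⟩ := rho_aux η hη ((1:ℝ)/2 + γ) (by linarith) (by linarith)
  exact ⟨T, hT, h⟩
end

section
/- Fix η > 0 and γ with 0 < γ ≤ 1/2 − η. With ρ(t) = (1/2)·(1 + 1/t − sqrt((1 + 1/t)² − (2/t)·(t^{1/2+γ} + 1))), for all sufficiently large t one has ρ(t) ≤ t^{γ−1/2}, and consequently for reals P, Q ≥ 1 with PQ sufficiently large, ρ(PQ)·PQ ≤ (PQ)^{1/2+γ}. -/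
/-- For fixed `η > 0` and `0 < γ ≤ 1/2 − η`, for all sufficiently large `t` one has
`ρ(t) ≤ t^{γ−1/2}`; consequently for `P, Q ≥ 1` with `PQ` sufficiently large,
`ρ(PQ)·PQ ≤ (PQ)^{1/2+γ}`. -/
theorem rho_upper_bound (η : ℝ) (hη : 0 < η) (γ : ℝ) (hγ0 : 0 < γ) (hγ : γ ≤ 1 / 2 - η) :
    ∃ T > (0 : ℝ), (∀ t : ℝ, T ≤ t → rho γ t ≤ t ^ (γ - 1 / 2)) ∧
      ∀ P Q : ℝ, 1 ≤ P → 1 ≤ Q → T ≤ P * Q →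
        rho γ (P * Q) * (P * Q) ≤ (P * Q) ^ (1 / 2 + γ) := by
  set T : ℝ := max ((4 : ℝ) ^ (1 / η)) 4 with hT
  have hTpos : (0 : ℝ) < T := lt_of_lt_of_le (by norm_num) (le_max_right _ _)
  have hmain : ∀ t : ℝ, T ≤ t → rho γ t ≤ t ^ (γ - 1 / 2) := by
    intro t ht
    have ht4 : (4 : ℝ) ≤ t := le_trans (le_max_right _ _) ht
    have ht0 : (0 : ℝ) < t := by linarith
    have ht1 : (1 : ℝ) ≤ t := by linarith
    set x := t ^ (γ - 1 / 2) with hxdef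
    have hx0 : 0 ≤ x := Real.rpow_nonneg ht0.le _
    -- 4 * x ≤ 1
    have hth : (4 : ℝ) ≤ t ^ η := by
      have h1 : ((4 : ℝ) ^ (1 / η)) ^ η ≤ t ^ η :=
        Real.rpow_le_rpow (Real.rpow_nonneg (by norm_num) _)
          (le_trans (le_max_left _ _) ht) hη.le
      rwa [← Real.rpow_mul (by norm_num : (0:ℝ) ≤ 4), one_div_mul_cancel hη.ne',
        Real.rpow_one] at h1
    have hx4 : 4 * x ≤ 1 := by
      have h1 : x ≤ t ^ (-η) := Real.rpow_le_rpow_of_exponent_le ht1 (by linarith)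
      have h2 : t ^ (-η) = (t ^ η)⁻¹ := Real.rpow_neg ht0.le η
      have h3 : (t ^ η)⁻¹ ≤ (4 : ℝ)⁻¹ := by
        exact inv_anti₀ (by norm_num) hth
      rw [h2] at h1
      nlinarith
    -- 2 / t ≤ x
    have hst : Real.sqrt t * Real.sqrt t = t := Real.mul_self_sqrt ht0.le
    have hst2 : (2 : ℝ) ≤ Real.sqrt t := by
      have := Real.sqrt_le_sqrt ht4
      rwa [show Real.sqrt 4 = 2 by
        rw [show (4:ℝ) = 2^2 by norm_num, Real.sqrt_sq (by norm_num)]] at this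
    have h2t : 2 / t ≤ x := by
      have h1 : t ^ (-(1:ℝ)/2) ≤ x := Real.rpow_le_rpow_of_exponent_le ht1 (by linarith)
      have h2 : t ^ (-(1:ℝ)/2) = (Real.sqrt t)⁻¹ := by
        rw [show (-(1:ℝ)/2) = -(1/2) by ring, Real.rpow_neg ht0.le, ← Real.sqrt_eq_rpow]
      have hs0 : (0:ℝ) < Real.sqrt t := by linarith
      have hinv : (Real.sqrt t)⁻¹ = Real.sqrt t / t := by
        rw [← hst]; field_simp; rw [Real.sqrt_sq hs0.le]
      have h3 : 2 / t ≤ (Real.sqrt t)⁻¹ := by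
        rw [hinv]
        gcongr
      linarith [h2 ▸ h1]
    -- rewrite the argument of sqrt
    have hb : (2 / t) * (t ^ ((1 : ℝ) / 2 + γ) + 1) = 2 * x + 2 / t := by
      have h1 : t ^ ((1 : ℝ) / 2 + γ) = x * t := by
        rw [hxdef, ← Real.rpow_add_one ht0.ne']
        congr 1; ring
      rw [h1]
      field_simp
    set a := 1 + 1 / t with ha
    have ha0 : (0:ℝ) < a := by
      rw [ha]; positivity
    have hrho : rho γ t = (1 / 2) * (a - Real.sqrt (a ^ 2 - (2 * x + 2 / t))) := by
      rw [rho, hb, ← ha]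
    clear_value x a
    by_cases hc : a - 2 * x ≤ 0
    · have hs := Real.sqrt_nonneg (a ^ 2 - (2 * x + 2 / t))
      rw [hrho]; linarith
    · push_neg at hc
      have hsq : (a - 2 * x) ^ 2 ≤ a ^ 2 - (2 * x + 2 / t) := by
        have h1 : 0 ≤ x * (1 / t) := by positivity
        nlinarith [mul_le_mul_of_nonneg_left hx4 hx0]
      have := Real.sqrt_le_sqrt hsq
      rw [Real.sqrt_sq hc.le] at this
      rw [hrho]; linarith
  refine ⟨T, hTpos, hmain, ?_⟩
  intro P Q hP hQ hPQ
  have hpq0 : (0 : ℝ) < P * Q := by nlinarith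
  have h := hmain _ hPQ
  calc rho γ (P * Q) * (P * Q) ≤ (P * Q) ^ (γ - 1 / 2) * (P * Q) :=
        mul_le_mul_of_nonneg_right h hpq0.le
    _ = (P * Q) ^ (γ - 1 / 2) * (P * Q) ^ (1 : ℝ) := by rw [Real.rpow_one]
    _ = (P * Q) ^ (γ - 1 / 2 + 1) := (Real.rpow_add hpq0 _ _).symm
    _ = (P * Q) ^ (1 / 2 + γ) := by congr 1; ring
end
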